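/- Let N be an odd positive integer, let K be an integer with 1 ≤ K ≤ N/4, and let 2/3 < β ≤ 1 and C > 0. Let μ : ℤ/Nℤ → ℂ satisfy |μ̂(k)| ≤ C·(min(k, N−k)·N)^{−β/2} for all 1 ≤ k ≤ N−1. Define μ₁ by μ̂₁(n) = (1 − n/(K+1))·μ̂(n) for 0 ≤ n ≤ K and μ̂₁(n) = 0 for K < n ≤ N−1, and let μ₂ = μ − μ₁. Then there is a constant C′ depending only on C and β (not on N or K) such that |Λ₃(μ₁, μ₂, μ₁)| ≤ C′·N^{−3β/2} and |Λ₃(μ₁, μ₂, μ₂)| ≤ C′·N^{−3β/2}. -/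

import Mathlib

open Complex Real Finset

/-- Discrete Fourier coefficient of `f : ℤ/Nℤ → ℂ`, extended `N`-periodically in `k`. -/
noncomputable def zmodFourier (N : ℕ) (f : ZMod N → ℂ) (k : ℤ) : ℂ :=
  (N : ℂ)⁻¹ * ∑ n ∈ Finset.range N,
    f n * Complex.exp (-(2 * Real.pi * Complex.I * k * n) / N)

/-- The trilinear form `Λ₃(f,g,h) = (1/N²) ∑_{x,r} f(x) g(x+r) h(x+2r)` on `ℤ/Nℤ`. -/
noncomputable def lambda3 (N : ℕ) (f g h : ZMod N → ℂ) : ℂ :=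
  ((N : ℂ) ^ 2)⁻¹ * ∑ x ∈ Finset.range N, ∑ r ∈ Finset.range N,
    f x * g ((x : ZMod N) + r) * h ((x : ZMod N) + 2 * r)


/-!
Expanding `h` by Fourier inversion and substituting `y = x + r` gives the spectral identity
`Λ₃(f, g, h) = ∑ₖ f̂(k) ĝ(-2k) ĥ(k)`. For `f = μ₁` only `0 ≤ k ≤ K` contribute, and `k = 0` drops
out since `μ̂₂(0) = μ̂(0) - μ̂₁(0) = 0`. For `1 ≤ k ≤ K ≤ N/4` both `k` and `-2k ≡ N - 2k` are at
distance at least `k` from `0` mod `N`, and `N - 2k > K` lies outside the support of `μ̂₁`, so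
`μ̂₂(-2k) = μ̂(N - 2k)`; hence each of the three factors is `O((kN)^(-β/2))`, and
`∑ₖ (kN)^(-3β/2) ≤ ζ(3β/2) N^(-3β/2)` because `3β/2 > 1`.
-/

open ZMod

lemma sum_Icc_mul_rpow_neg_le {s x : ℝ} (hs : 1 < s) (hx : 0 ≤ x) (K : ℕ) :
    ∑ k ∈ Icc 1 K, ((k : ℝ) * x) ^ (-s) ≤ (∑' n : ℕ, (n : ℝ) ^ (-s)) * x ^ (-s) := by
  simp only [Real.mul_rpow (Nat.cast_nonneg _) hx, ← sum_mul]
  gcongr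
  exact (Real.summable_nat_rpow.2 (by linarith)).sum_le_tsum _ fun _ _ ↦ by positivity

lemma norm_one_sub_natCast_div_le_one {n K : ℕ} (h : n ≤ K) : ‖1 - (n : ℂ) / (K + 1)‖ ≤ 1 := by
  have ht : (n : ℝ) / (K + 1) ≤ 1 := (div_le_one (by positivity)).2 (by norm_cast; omega)
  have ht' : 0 ≤ (n : ℝ) / (K + 1) := by positivity
  rw [show 1 - (n : ℂ) / (K + 1) = ((1 - (n : ℝ) / (K + 1) : ℝ) : ℂ) by push_cast; rfl,
    Complex.norm_real, Real.norm_eq_abs, abs_le]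
  constructor <;> linarith

namespace ZMod

variable {N : ℕ} [NeZero N]

lemma sum_range_natCast {M : Type*} [AddCommMonoid M] (F : ZMod N → M) :
    ∑ n ∈ range N, F n = ∑ x : ZMod N, F x :=
  sum_nbij' (fun n ↦ n) val (fun _ _ ↦ mem_univ _) (fun x _ ↦ mem_range.2 x.val_lt)
    (fun _ hn ↦ val_natCast_of_lt (mem_range.1 hn)) (fun x _ ↦ natCast_zmod_val x) fun _ _ ↦ rfl

lemma dft_mul_dft_neg_two_mul (f g : ZMod N → ℂ) (k : ZMod N) :
    𝓕 f k * 𝓕 g (-(2 * k)) =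
      ∑ x : ZMod N, ∑ r : ZMod N, f x * g (x + r) * stdAddChar ((x + 2 * r) * k) := by
  simp only [dft_apply, smul_eq_mul, sum_mul_sum]
  refine sum_congr rfl fun x _ ↦ ?_
  rw [← Equiv.sum_comp (Equiv.addLeft x)]
  refine sum_congr rfl fun r _ ↦ ?_
  simp only [Equiv.coe_addLeft]
  rw [show (x + 2 * r) * k = -(x * k) + -((x + r) * -(2 * k)) by ring, AddChar.map_add_eq_mul]
  ring

lemma sum_sum_mul_eq_sum_dft (f g h : ZMod N → ℂ) :
    ∑ x : ZMod N, ∑ r : ZMod N, f x * g (x + r) * h (x + 2 * r) =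
      (N : ℂ)⁻¹ * ∑ k : ZMod N, 𝓕 f k * 𝓕 g (-(2 * k)) * 𝓕 h k := by
  conv_lhs => rw [← LinearEquiv.symm_apply_apply dft h]
  simp only [invDFT_apply, smul_eq_mul, dft_mul_dft_neg_two_mul, mul_sum, sum_mul]
  conv_rhs => rw [sum_comm]
  refine sum_congr rfl fun x _ ↦ ?_
  conv_rhs => rw [sum_comm]
  refine sum_congr rfl fun r _ ↦ sum_congr rfl fun k _ ↦ ?_
  rw [mul_comm k]
  ring

end ZMod

section Fourier

variable {N : ℕ} [NeZero N]

lemma zmodFourier_eq_dft (f : ZMod N → ℂ) (k : ℤ) :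
    zmodFourier N f k = (N : ℂ)⁻¹ * 𝓕 f k := by
  rw [zmodFourier, dft_apply, ← sum_range_natCast]
  congr 1
  refine sum_congr rfl fun n _ ↦ ?_
  rw [smul_eq_mul, mul_comm,
    show -((n : ZMod N) * k) = ((-(k * n) : ℤ) : ZMod N) by push_cast; ring, stdAddChar_coe]
  push_cast
  ring_nf

lemma zmodFourier_congr (f : ZMod N → ℂ) {k l : ℤ} (h : (k : ZMod N) = l) :
    zmodFourier N f k = zmodFourier N f l := by
  rw [zmodFourier_eq_dft, zmodFourier_eq_dft, h]

lemma zmodFourier_sub (f g : ZMod N → ℂ) (k : ℤ) :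
    zmodFourier N (f - g) k = zmodFourier N f k - zmodFourier N g k := by
  simp only [zmodFourier_eq_dft, map_sub, Pi.sub_apply, mul_sub]

lemma zmodFourier_neg_natCast (f : ZMod N → ℂ) {k : ℕ} (hk : k ≤ N) :
    zmodFourier N f (-k) = zmodFourier N f (N - k : ℕ) :=
  zmodFourier_congr f (by push_cast [Nat.cast_sub hk]; simp)

lemma lambda3_eq_sum_zmod (f g h : ZMod N → ℂ) :
    lambda3 N f g h =
      ((N : ℂ) ^ 2)⁻¹ * ∑ x : ZMod N, ∑ r : ZMod N, f x * g (x + r) * h (x + 2 * r) := by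
  rw [lambda3, ← sum_range_natCast]
  congr 1
  exact sum_congr rfl fun n _ ↦
    sum_range_natCast fun r ↦ f n * g ((n : ZMod N) + r) * h ((n : ZMod N) + 2 * r)

lemma lambda3_eq_sum_zmodFourier (f g h : ZMod N → ℂ) :
    lambda3 N f g h = ∑ k ∈ range N,
      zmodFourier N f k * zmodFourier N g (-(2 * k)) * zmodFourier N h k := by
  have hN : (N : ℂ) ≠ 0 := Nat.cast_ne_zero.2 (NeZero.ne N)
  simp only [zmodFourier_eq_dft, Int.cast_neg, Int.cast_mul, Int.cast_ofNat, Int.cast_natCast]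
  rw [sum_range_natCast (fun k ↦ (N : ℂ)⁻¹ * 𝓕 f k * ((N : ℂ)⁻¹ * 𝓕 g (-(2 * k))) *
    ((N : ℂ)⁻¹ * 𝓕 h k)), lambda3_eq_sum_zmod, sum_sum_mul_eq_sum_dft, mul_sum, mul_sum]
  refine sum_congr rfl fun k _ ↦ ?_
  field_simp

lemma norm_lambda3_le_sum_Icc {K : ℕ} {f g h : ZMod N → ℂ}
    (hf : ∀ k : ℕ, K < k → k < N → zmodFourier N f k = 0) (hg : zmodFourier N g 0 = 0) :
    ‖lambda3 N f g h‖ ≤ ∑ k ∈ Icc 1 K,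
      ‖zmodFourier N f k‖ * ‖zmodFourier N g (-(2 * k))‖ * ‖zmodFourier N h k‖ := by
  have hvanish : ∀ k ∈ range N, k ∉ range N ∩ Icc 1 K →
      ‖zmodFourier N f k‖ * ‖zmodFourier N g (-(2 * k))‖ * ‖zmodFourier N h k‖ = 0 := by
    intro k hk hkK
    rcases Nat.eq_zero_or_pos k with rfl | hk0
    · simp [hg]
    · have hKk : K < k := by
        simp only [mem_inter, mem_Icc, not_and, not_le] at hkK
        exact hkK hk hk0
      rw [hf k hKk (mem_range.1 hk)]
      simp
  rw [lambda3_eq_sum_zmodFourier]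
  calc _ ≤ ∑ k ∈ range N,
        ‖zmodFourier N f k‖ * ‖zmodFourier N g (-(2 * k))‖ * ‖zmodFourier N h k‖ :=
        (norm_sum_le _ _).trans_eq (by simp only [norm_mul])
    _ = ∑ k ∈ range N ∩ Icc 1 K,
        ‖zmodFourier N f k‖ * ‖zmodFourier N g (-(2 * k))‖ * ‖zmodFourier N h k‖ :=
      (sum_subset inter_subset_left hvanish).symm
    _ ≤ _ := sum_le_sum_of_subset_of_nonneg inter_subset_right fun _ _ _ ↦ by positivity

lemma norm_lambda3_le_of_decay {K : ℕ} {f g h : ZMod N → ℂ} {β a b c : ℝ} (hβ : 2 / 3 < β)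
    (ha : 0 ≤ a) (hb : 0 ≤ b) (hc : 0 ≤ c)
    (hf_supp : ∀ k : ℕ, K < k → k < N → zmodFourier N f k = 0) (hg_zero : zmodFourier N g 0 = 0)
    (hf : ∀ k ∈ Icc 1 K, ‖zmodFourier N f k‖ ≤ a * ((k : ℝ) * N) ^ (-β / 2))
    (hg : ∀ k ∈ Icc 1 K, ‖zmodFourier N g (-(2 * k))‖ ≤ b * ((k : ℝ) * N) ^ (-β / 2))
    (hh : ∀ k ∈ Icc 1 K, ‖zmodFourier N h k‖ ≤ c * ((k : ℝ) * N) ^ (-β / 2)) :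
    ‖lambda3 N f g h‖ ≤
      a * b * c * (∑' n : ℕ, (n : ℝ) ^ (-(3 * β) / 2)) * (N : ℝ) ^ (-(3 * β) / 2) := by
  have hterm : ∀ k ∈ Icc 1 K,
      ‖zmodFourier N f k‖ * ‖zmodFourier N g (-(2 * k))‖ * ‖zmodFourier N h k‖ ≤
        a * b * c * ((k : ℝ) * N) ^ (-(3 * β) / 2) := by
    intro k hk
    have hpos : (0 : ℝ) < k * N := by
      have := (mem_Icc.1 hk).1
      have := NeZero.pos N
      positivity
    calc _ ≤ a * ((k : ℝ) * N) ^ (-β / 2) * (b * ((k : ℝ) * N) ^ (-β / 2)) *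
          (c * ((k : ℝ) * N) ^ (-β / 2)) := by
          gcongr
          exacts [hf k hk, hg k hk, hh k hk]
      _ = _ := by
        rw [show -(3 * β) / 2 = -β / 2 + -β / 2 + -β / 2 by ring, Real.rpow_add hpos,
          Real.rpow_add hpos]
        ring
  calc _ ≤ ∑ k ∈ Icc 1 K,
        ‖zmodFourier N f k‖ * ‖zmodFourier N g (-(2 * k))‖ * ‖zmodFourier N h k‖ :=
        norm_lambda3_le_sum_Icc hf_supp hg_zero
    _ ≤ a * b * c * ∑ k ∈ Icc 1 K, ((k : ℝ) * N) ^ (-(3 * β) / 2) := by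
        rw [mul_sum]
        exact sum_le_sum hterm
    _ ≤ _ := by
        rw [mul_assoc _ (tsum _), neg_div]
        gcongr
        exact sum_Icc_mul_rpow_neg_le (by linarith) (Nat.cast_nonneg N) K

end Fourier

lemma norm_zmodFourier_le_of_decay {N : ℕ} {μ : ZMod N → ℂ} {C β : ℝ} (hC : 0 ≤ C) (hβ : 0 ≤ β)
    (hμ : ∀ k : ℕ, 1 ≤ k → k ≤ N - 1 →
      ‖zmodFourier N μ k‖ ≤ C * ((min k (N - k) * N : ℕ) : ℝ) ^ (-β / 2))
    {k m : ℕ} (hk : 1 ≤ k) (hkm : k ≤ m) (hmN : m ≤ N - k) :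
    ‖zmodFourier N μ m‖ ≤ C * ((k : ℝ) * N) ^ (-β / 2) := by
  have hpos : (0 : ℝ) < k * N := by
    have : 0 < N := by omega
    positivity
  have hle : (k : ℝ) * N ≤ ((min m (N - m) * N : ℕ) : ℝ) := by
    push_cast
    gcongr
    exact_mod_cast le_min hkm (by omega)
  exact (hμ m (by omega) (by omega)).trans <|
    mul_le_mul_of_nonneg_left (Real.rpow_le_rpow_of_nonpos hpos hle (by linarith)) hC

theorem lambda3_cross_terms_bound_general (C β : ℝ) (hC : 0 < C)
    (hβ₁ : 2/3 < β) :
    ∃ C' : ℝ, 0 < C' ∧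
      ∀ (N K : ℕ), Odd N → 0 < N → 1 ≤ K → (K : ℝ) ≤ (N : ℝ) / 4 →
      ∀ μ μ₁ : ZMod N → ℂ,
        (∀ k : ℕ, 1 ≤ k → k ≤ N - 1 →
          ‖zmodFourier N μ k‖ ≤
            C * ((min k (N - k) * N : ℕ) : ℝ) ^ (-β / 2)) →
        (∀ n : ℕ, n ≤ K →
          zmodFourier N μ₁ n = (1 - (n : ℂ) / (K + 1)) * zmodFourier N μ n) →
        (∀ n : ℕ, K < n → n ≤ N - 1 → zmodFourier N μ₁ n = 0) →
        ‖lambda3 N μ₁ (μ - μ₁) μ₁‖ ≤ C' * (N : ℝ) ^ (-(3 * β) / 2) ∧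
        ‖lambda3 N μ₁ (μ - μ₁) (μ - μ₁)‖ ≤
          C' * (N : ℝ) ^ (-(3 * β) / 2) := by
  have hZ : 0 < ∑' n : ℕ, (n : ℝ) ^ (-(3 * β) / 2) :=
    (Real.summable_nat_rpow.2 (by linarith)).tsum_pos (fun _ ↦ by positivity) 1 (by simp)
  refine ⟨C * C * (2 * C) * ∑' n : ℕ, (n : ℝ) ^ (-(3 * β) / 2), by positivity, ?_⟩
  intro N K _ hN _ hKN μ μ₁ hμ hμ₁ hμ₁_supp
  have : NeZero N := ⟨hN.ne'⟩
  have h4K : 4 * K ≤ N := by exact_mod_cast (by push_cast; linarith : ((4 * K : ℕ) : ℝ) ≤ N)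
  have hμ_le {k m : ℕ} (hk : k ∈ Icc 1 K) (hkm : k ≤ m) (hmN : m ≤ N - k) :=
    norm_zmodFourier_le_of_decay hC.le (by linarith) hμ (mem_Icc.1 hk).1 hkm hmN
  have hμ₁_le : ∀ k ∈ Icc 1 K, ‖zmodFourier N μ₁ k‖ ≤ C * ((k : ℝ) * N) ^ (-β / 2) := by
    intro k hk
    have hkK := (mem_Icc.1 hk).2
    rw [hμ₁ k hkK, norm_mul]
    exact mul_le_of_le_one_left (norm_nonneg _) (norm_one_sub_natCast_div_le_one hkK) |>.trans
      (hμ_le hk le_rfl (by omega))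
  have hμ₂_le : ∀ k ∈ Icc 1 K, ‖zmodFourier N (μ - μ₁) k‖ ≤ 2 * C * ((k : ℝ) * N) ^ (-β / 2) := by
    intro k hk
    have hkK := (mem_Icc.1 hk).2
    rw [zmodFourier_sub]
    linarith [norm_sub_le (zmodFourier N μ k) (zmodFourier N μ₁ k), hμ_le hk le_rfl (by omega),
      hμ₁_le k hk]
  have hμ₂_neg : ∀ k ∈ Icc 1 K,
      ‖zmodFourier N (μ - μ₁) (-(2 * k))‖ ≤ C * ((k : ℝ) * N) ^ (-β / 2) := by
    intro k hk
    obtain ⟨hk1, hkK⟩ := mem_Icc.1 hk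
    rw [show -(2 * (k : ℤ)) = -((2 * k : ℕ) : ℤ) by push_cast; rfl,
      zmodFourier_neg_natCast _ (by omega), zmodFourier_sub, hμ₁_supp _ (by omega) (by omega),
      sub_zero]
    exact hμ_le hk (by omega) (by omega)
  have hμ₂_zero : zmodFourier N (μ - μ₁) 0 = 0 := by
    rw [zmodFourier_sub, sub_eq_zero]
    simpa using (hμ₁ 0 K.zero_le).symm
  have hμ₁_vanish (k : ℕ) (h₁ : K < k) (h₂ : k < N) := hμ₁_supp k h₁ (by omega)
  have h2C : 0 ≤ 2 * C := by positivity
  exact ⟨norm_lambda3_le_of_decay hβ₁ hC.le hC.le h2C hμ₁_vanish hμ₂_zero hμ₁_le hμ₂_neg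
      fun k hk ↦ (hμ₁_le k hk).trans (by gcongr; linarith),
    norm_lambda3_le_of_decay hβ₁ hC.le hC.le h2C hμ₁_vanish hμ₂_zero hμ₁_le hμ₂_neg hμ₂_le⟩

/-- The cross terms `Λ₃(μ₁, μ₂, μ₁)` and `Λ₃(μ₁, μ₂, μ₂)` of the Fejér decomposition
are `O(N^{-3β/2})`, with constant depending only on `C` and `β`. -/
theorem lambda3_cross_terms_bound (C β : ℝ) (hC : 0 < C)
    (hβ₁ : 2/3 < β) (hβ₂ : β ≤ 1) :
    ∃ C' : ℝ, 0 < C' ∧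
      ∀ (N K : ℕ), Odd N → 0 < N → 1 ≤ K → (K : ℝ) ≤ (N : ℝ) / 4 →
      ∀ μ μ₁ : ZMod N → ℂ,
        (∀ k : ℕ, 1 ≤ k → k ≤ N - 1 →
          ‖zmodFourier N μ k‖ ≤
            C * ((min k (N - k) * N : ℕ) : ℝ) ^ (-β / 2)) →
        (∀ n : ℕ, n ≤ K →
          zmodFourier N μ₁ n = (1 - (n : ℂ) / (K + 1)) * zmodFourier N μ n) →
        (∀ n : ℕ, K < n → n ≤ N - 1 → zmodFourier N μ₁ n = 0) →
        ‖lambda3 N μ₁ (μ - μ₁) μ₁‖ ≤ C' * (N : ℝ) ^ (-(3 * β) / 2) ∧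
        ‖lambda3 N μ₁ (μ - μ₁) (μ - μ₁)‖ ≤
          C' * (N : ℝ) ^ (-(3 * β) / 2) :=
  lambda3_cross_terms_bound_general C β hC hβ₁
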